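/- arXiv:1006.5727 — 10 statements merged into one kernel-verified Lean document; each statement's English description precedes it below -/
import Mathlib

section
/- Let G be a finite group, u ∈ Aut(G), and let O be the orbit of an element x ∈ G under the twisted action g ⇀ y = g y u(g^{-1}). Then the operation y ▷ z = y · u(z y^{-1}) makes O a rack (in particular, O is closed under ▷, each left translation is bijective, and self-distributivity holds). -/
/-!
Writing `g ⇀ y = g y u(g)⁻¹`, one has `y ▷ z = y ⇀ u(z)`, so each left translation `y ▷ ·` is
`u` followed by the action of `y`. The action of `y` permutes the orbit `O` of `x`, and so does
`u`: it carries `g ⇀ x` to `u(g) ⇀ u(x)`, and `u(x) = x⁻¹ ⇀ x`, `u⁻¹(x) = u⁻¹(x) ⇀ x` lie in `O`.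
Self-distributivity is a direct computation that holds for every endomorphism `u`.
-/

namespace TwistedConj

open Set

variable {G F : Type*} [Group G] [FunLike F G G] [MonoidHomClass F G G]

def act (u : F) (g y : G) : G := g * y * u g⁻¹

def orbit (u : F) (x : G) : Set G := {y | ∃ g, y = act u g x}

def rackOp (u : F) (y z : G) : G := y * u (z * y⁻¹)

theorem act_one (u : F) (y : G) : act u 1 y = y := by
  simp [act]

theorem act_mul (u : F) (g h y : G) : act u (g * h) y = act u g (act u h y) := by
  simp only [act, mul_inv_rev, map_mul]
  group

theorem act_inv_act (u : F) (g y : G) : act u g⁻¹ (act u g y) = y := by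
  rw [← act_mul, inv_mul_cancel, act_one]

theorem act_mem_orbit (u : F) (g : G) {x y : G} (hy : y ∈ orbit u x) :
    act u g y ∈ orbit u x := by
  obtain ⟨h, rfl⟩ := hy
  exact ⟨g * h, (act_mul u g h x).symm⟩

theorem bijOn_act (u : F) (g x : G) : BijOn (act u g) (orbit u x) (orbit u x) :=
  InvOn.bijOn ⟨fun y _ => act_inv_act u g y, fun y _ => by simpa using act_inv_act u g⁻¹ y⟩
    (fun _ => act_mem_orbit u g) (fun _ => act_mem_orbit u g⁻¹)

theorem map_act (u : F) (g y : G) : u (act u g y) = act u (u g) (u y) := by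
  simp only [act, map_mul, map_inv]

theorem map_mem_orbit (u : F) {x y : G} (hy : y ∈ orbit u x) : u y ∈ orbit u x := by
  obtain ⟨g, rfl⟩ := hy
  have hx : u x = act u x⁻¹ x := by simp [act]
  exact ⟨u g * x⁻¹, by rw [map_act, hx, act_mul]⟩

theorem rackOp_eq_act (u : F) (y z : G) : rackOp u y z = act u y (u z) := by
  simp only [rackOp, act, map_mul, mul_assoc]

theorem rackOp_self_distrib (u : F) (y z w : G) :
    rackOp u y (rackOp u z w) = rackOp u (rackOp u y z) (rackOp u y w) := by
  simp only [rackOp, map_mul, map_inv]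
  group

theorem symm_mem_orbit (u : G ≃* G) {x y : G} (hy : y ∈ orbit u x) : u.symm y ∈ orbit u x := by
  obtain ⟨g, rfl⟩ := hy
  have hx : u.symm x = act u (u.symm x) x := by simp [act]
  refine ⟨u.symm g * u.symm x, ?_⟩
  rw [act_mul, ← hx]
  simp [act]

theorem bijOn_map_orbit (u : G ≃* G) (x : G) : BijOn u (orbit u x) (orbit u x) :=
  u.toEquiv.bijOn fun y =>
    ⟨fun hy => by simpa using symm_mem_orbit u hy, map_mem_orbit u⟩

theorem bijOn_rackOp (u : G ≃* G) (y x : G) : BijOn (rackOp u y) (orbit u x) (orbit u x) := by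
  have h : rackOp u y = act u y ∘ u := funext (rackOp_eq_act u y)
  exact h ▸ (bijOn_act u y x).comp (bijOn_map_orbit u x)

end TwistedConj

theorem twisted_conjugacy_class_is_rack_general {G : Type*} [Group G]
    (u : G ≃* G) (x : G) :
    let O : Set G := {y | ∃ g : G, y = g * x * u g⁻¹}
    let op : G → G → G := fun y z => y * u (z * y⁻¹)
    (∀ y ∈ O, ∀ z ∈ O, op y z ∈ O) ∧
    (∀ y ∈ O, Set.BijOn (op y) O O) ∧
    (∀ y z w : G, op y (op z w) = op (op y z) (op y w)) := by
  intro O op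
  have hbij : ∀ y, Set.BijOn (op y) O O := fun y => TwistedConj.bijOn_rackOp u y x
  exact ⟨fun y _ _ hz => (hbij y).mapsTo hz, fun y _ => hbij y,
    TwistedConj.rackOp_self_distrib u⟩

/-- For a finite group `G`, `u ∈ Aut(G)` and `x ∈ G`, the twisted
conjugacy class `O = {g x u(g)⁻¹ : g ∈ G}` with `y ▷ z = y · u(z y⁻¹)` is a rack:
`O` is closed under `▷`, each left translation is a bijection of `O`, and
self-distributivity holds. -/
theorem twisted_conjugacy_class_is_rack {G : Type*} [Group G] [Fintype G]
    (u : G ≃* G) (x : G) :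
    let O : Set G := {y | ∃ g : G, y = g * x * u g⁻¹}
    let op : G → G → G := fun y z => y * u (z * y⁻¹)
    (∀ y ∈ O, ∀ z ∈ O, op y z ∈ O) ∧
    (∀ y ∈ O, Set.BijOn (op y) O O) ∧
    (∀ y z w : G, op y (op z w) = op (op y z) (op y w)) :=
  twisted_conjugacy_class_is_rack_general u x
end

section
/- Let X be a rack and q : X × X → GL(n, ℂ) a 2-cocycle, i.e., q_{x, y ▷ z} ∘ q_{y,z} = q_{x ▷ y, x ▷ z} ∘ q_{x,z} for all x, y, z ∈ X. Let V = ℂX ⊗ ℂⁿ with basis elements e_x ⊗ v, and define c(e_x v ⊗ e_y w) = e_{x ▷ y} q_{x,y}(w) ⊗ e_x v. Then c satisfies the braid equation (c ⊗ id)(id ⊗ c)(c ⊗ id) = (id ⊗ c)(c ⊗ id)(id ⊗ c) on V ⊗ V ⊗ V. -/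
/-!
Both sides of the braid equation send `e_x u ⊗ e_y v ⊗ e_z w` to a tensor whose last two
factors are `e_{x ▷ y} q_{x,y} v ⊗ e_x u`. In the first factor one side gives
`e_{x ▷ (y ▷ z)} q_{x,y▷z} q_{y,z} w` and the other `e_{(x ▷ y) ▷ (x ▷ z)} q_{x▷y,x▷z} q_{x,z} w`,
which agree by self-distributivity and the cocycle condition.
-/

open TensorProduct

namespace TensorProduct

variable {R W : Type*} [CommSemiring R] [AddCommMonoid W] [Module R W]

variable (R) in
def braidLeft (c : W ⊗[R] W →ₗ[R] W ⊗[R] W) : (W ⊗[R] W) ⊗[R] W →ₗ[R] (W ⊗[R] W) ⊗[R] W :=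
  map c LinearMap.id

variable (R) in
def braidRight (c : W ⊗[R] W →ₗ[R] W ⊗[R] W) : (W ⊗[R] W) ⊗[R] W →ₗ[R] (W ⊗[R] W) ⊗[R] W :=
  (TensorProduct.assoc R W W W).symm.toLinearMap ∘ₗ map LinearMap.id c ∘ₗ
    (TensorProduct.assoc R W W W).toLinearMap

theorem braidLeft_tmul (c : W ⊗[R] W →ₗ[R] W ⊗[R] W) (a b d : W) :
    braidLeft R c ((a ⊗ₜ b) ⊗ₜ d) = c (a ⊗ₜ b) ⊗ₜ d :=
  rfl

theorem braidRight_tmul (c : W ⊗[R] W →ₗ[R] W ⊗[R] W) (a b d : W) :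
    braidRight R c ((a ⊗ₜ b) ⊗ₜ d) = (TensorProduct.assoc R W W W).symm (a ⊗ₜ c (b ⊗ₜ d)) :=
  rfl

end TensorProduct

section RackCocycle

variable {R M X : Type*} [CommSemiring R] [AddCommMonoid M] [Module R M]

theorem braid_eq_of_rack_cocycle (op : X → X → X)
    (hsd : ∀ x y z : X, op x (op y z) = op (op x y) (op x z))
    (q : X → X → M →ₗ[R] M)
    (hq : ∀ x y z : X, ∀ w : M, q x (op y z) (q y z w) = q (op x y) (op x z) (q x z w))
    (c : (X →₀ M) ⊗[R] (X →₀ M) →ₗ[R] (X →₀ M) ⊗[R] (X →₀ M))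
    (hc : ∀ (x y : X) (v w : M),
      c (Finsupp.single x v ⊗ₜ Finsupp.single y w) =
        Finsupp.single (op x y) (q x y w) ⊗ₜ Finsupp.single x v) :
    braidLeft R c ∘ₗ braidRight R c ∘ₗ braidLeft R c =
      braidRight R c ∘ₗ braidLeft R c ∘ₗ braidRight R c := by
  ext x u y v z w
  simp only [LinearMap.coe_comp, Function.comp_apply, Finsupp.lsingle_apply,
    AlgebraTensorModule.curry_apply, LinearMap.restrictScalars_self, curry_apply,
    braidLeft_tmul, braidRight_tmul, hc, assoc_symm_tmul]
  rw [hsd x y z, hq x y z w]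

end RackCocycle

theorem braiding_of_rack_cocycle_satisfies_braid_equation_general
    {X : Type*} (op : X → X → X)
    (hsd : ∀ x y z : X, op x (op y z) = op (op x y) (op x z))
    (n : ℕ) (q : X → X → ((Fin n → ℂ) ≃ₗ[ℂ] (Fin n → ℂ)))
    (hq : ∀ x y z : X, ∀ w : Fin n → ℂ,
      q x (op y z) (q y z w) = q (op x y) (op x z) (q x z w))
    (c : ((X →₀ (Fin n → ℂ)) ⊗[ℂ] (X →₀ (Fin n → ℂ))) →ₗ[ℂ]
          ((X →₀ (Fin n → ℂ)) ⊗[ℂ] (X →₀ (Fin n → ℂ))))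
    (hc : ∀ (x y : X) (v w : Fin n → ℂ),
      c (Finsupp.single x v ⊗ₜ[ℂ] Finsupp.single y w) =
        Finsupp.single (op x y) (q x y w) ⊗ₜ[ℂ] Finsupp.single x v) :
    let W := (X →₀ (Fin n → ℂ))
    let c12 : (W ⊗[ℂ] W) ⊗[ℂ] W →ₗ[ℂ] (W ⊗[ℂ] W) ⊗[ℂ] W :=
      TensorProduct.map c LinearMap.id
    let c23 : (W ⊗[ℂ] W) ⊗[ℂ] W →ₗ[ℂ] (W ⊗[ℂ] W) ⊗[ℂ] W :=
      (TensorProduct.assoc ℂ W W W).symm.toLinearMap ∘ₗ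
        TensorProduct.map LinearMap.id c ∘ₗ (TensorProduct.assoc ℂ W W W).toLinearMap
    c12 ∘ₗ c23 ∘ₗ c12 = c23 ∘ₗ c12 ∘ₗ c23 := by
  exact braid_eq_of_rack_cocycle op hsd (fun x y => (q x y).toLinearMap) hq c hc

/-- The braiding `c^q` on `V = ℂX ⊗ ℂⁿ` associated to a rack `X`
and a 2-cocycle `q` of degree `n` satisfies the braid equation. -/
theorem braiding_of_rack_cocycle_satisfies_braid_equation
    {X : Type*} (op : X → X → X)
    (hbij : ∀ x : X, Function.Bijective (op x))
    (hsd : ∀ x y z : X, op x (op y z) = op (op x y) (op x z))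
    (n : ℕ) (q : X → X → ((Fin n → ℂ) ≃ₗ[ℂ] (Fin n → ℂ)))
    (hq : ∀ x y z : X, ∀ w : Fin n → ℂ,
      q x (op y z) (q y z w) = q (op x y) (op x z) (q x z w))
    (c : ((X →₀ (Fin n → ℂ)) ⊗[ℂ] (X →₀ (Fin n → ℂ))) →ₗ[ℂ]
          ((X →₀ (Fin n → ℂ)) ⊗[ℂ] (X →₀ (Fin n → ℂ))))
    (hc : ∀ (x y : X) (v w : Fin n → ℂ),
      c (Finsupp.single x v ⊗ₜ[ℂ] Finsupp.single y w) =
        Finsupp.single (op x y) (q x y w) ⊗ₜ[ℂ] Finsupp.single x v) :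
    let W := (X →₀ (Fin n → ℂ))
    let c12 : (W ⊗[ℂ] W) ⊗[ℂ] W →ₗ[ℂ] (W ⊗[ℂ] W) ⊗[ℂ] W :=
      TensorProduct.map c LinearMap.id
    let c23 : (W ⊗[ℂ] W) ⊗[ℂ] W →ₗ[ℂ] (W ⊗[ℂ] W) ⊗[ℂ] W :=
      (TensorProduct.assoc ℂ W W W).symm.toLinearMap ∘ₗ
        TensorProduct.map LinearMap.id c ∘ₗ (TensorProduct.assoc ℂ W W W).toLinearMap
    c12 ∘ₗ c23 ∘ₗ c12 = c23 ∘ₗ c12 ∘ₗ c23 :=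
  braiding_of_rack_cocycle_satisfies_braid_equation_general op hsd n q hq c hc
end

section
/- Let X be a rack, q a ℂ^×-valued 2-cocycle on X, and φ : X × X → ℂ^× a map satisfying φ(x,z)φ(x▷y, x▷z)φ(x▷(y▷z), x)φ(y▷z, y) = φ(y,z)φ(x, y▷z)φ(x▷(y▷z), x▷y)φ(x▷z, x) for all x, y, z ∈ X. Then q^φ defined by q^φ_{x,y} = φ(x,y) φ(x ▷ y, x)^{-1} q_{x,y} is again a 2-cocycle on X. -/
/-! The twisted cocycle is the pointwise product of `q` with
`ψ(x,y) = φ(x,y) φ(x▷y,x)⁻¹`. Cocycles with values in a commutative group are closed under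
pointwise products, and, once `(x▷y)▷(x▷z)` is rewritten as `x▷(y▷z)` by self-distributivity,
the cocycle identity for `ψ` is the twisting condition on `φ` with its denominators cleared. -/

section RackCocycle

variable {X G : Type*} (op : X → X → X)

def IsRackTwoCocycle [Mul G] (q : X → X → G) : Prop :=
  ∀ x y z : X, q x (op y z) * q y z = q (op x y) (op x z) * q x z

def twistFactor [Group G] (φ : X → X → G) (x y : X) : G :=
  φ x y * (φ (op x y) x)⁻¹

variable {op}

theorem IsRackTwoCocycle.mul [CommMonoid G] {p q : X → X → G} (hp : IsRackTwoCocycle op p)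
    (hq : IsRackTwoCocycle op q) : IsRackTwoCocycle op fun x y => p x y * q x y := by
  intro x y z
  calc p x (op y z) * q x (op y z) * (p y z * q y z)
      = (p x (op y z) * p y z) * (q x (op y z) * q y z) := mul_mul_mul_comm _ _ _ _
    _ = (p (op x y) (op x z) * p x z) * (q (op x y) (op x z) * q x z) := by rw [hp, hq]
    _ = p (op x y) (op x z) * q (op x y) (op x z) * (p x z * q x z) := mul_mul_mul_comm _ _ _ _

theorem isRackTwoCocycle_twistFactor [CommGroup G] {φ : X → X → G}
    (hsd : ∀ x y z : X, op x (op y z) = op (op x y) (op x z))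
    (hφ : ∀ x y z : X,
      φ x z * φ (op x y) (op x z) * φ (op x (op y z)) x * φ (op y z) y =
        φ y z * φ x (op y z) * φ (op x (op y z)) (op x y) * φ (op x z) x) :
    IsRackTwoCocycle op (twistFactor op φ) := by
  intro x y z
  simp only [twistFactor, ← div_eq_mul_inv, ← hsd x y z]
  rw [div_mul_div_comm, div_mul_div_comm, div_eq_div_iff_mul_eq_mul]
  convert (hφ x y z).symm using 1 <;> ac_rfl

end RackCocycle

theorem twisted_cocycle_is_cocycle_general {X : Type*} (op : X → X → X)
    (hsd : ∀ x y z : X, op x (op y z) = op (op x y) (op x z))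
    (q : X → X → ℂˣ)
    (hq : ∀ x y z : X, q x (op y z) * q y z = q (op x y) (op x z) * q x z)
    (φ : X → X → ℂˣ)
    (hφ : ∀ x y z : X,
      φ x z * φ (op x y) (op x z) * φ (op x (op y z)) x * φ (op y z) y =
        φ y z * φ x (op y z) * φ (op x (op y z)) (op x y) * φ (op x z) x) :
    ∀ x y z : X,
      (φ x (op y z) * (φ (op x (op y z)) x)⁻¹ * q x (op y z)) *
        (φ y z * (φ (op y z) y)⁻¹ * q y z) =
      (φ (op x y) (op x z) * (φ (op (op x y) (op x z)) (op x y))⁻¹ *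
          q (op x y) (op x z)) *
        (φ x z * (φ (op x z) x)⁻¹ * q x z) :=
  (isRackTwoCocycle_twistFactor hsd hφ).mul hq

/-- Twisting a rack 2-cocycle `q` by a map `φ` satisfying the
twisting condition yields another 2-cocycle `q^φ_{x,y} = φ(x,y) φ(x▷y,x)⁻¹ q_{x,y}`. -/
theorem twisted_cocycle_is_cocycle {X : Type*} (op : X → X → X)
    (hbij : ∀ x : X, Function.Bijective (op x))
    (hsd : ∀ x y z : X, op x (op y z) = op (op x y) (op x z))
    (q : X → X → ℂˣ)
    (hq : ∀ x y z : X, q x (op y z) * q y z = q (op x y) (op x z) * q x z)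
    (φ : X → X → ℂˣ)
    (hφ : ∀ x y z : X,
      φ x z * φ (op x y) (op x z) * φ (op x (op y z)) x * φ (op y z) y =
        φ y z * φ x (op y z) * φ (op x (op y z)) (op x y) * φ (op x z) x) :
    ∀ x y z : X,
      (φ x (op y z) * (φ (op x (op y z)) x)⁻¹ * q x (op y z)) *
        (φ y z * (φ (op y z) y)⁻¹ * q y z) =
      (φ (op x y) (op x z) * (φ (op (op x y) (op x z)) (op x y))⁻¹ *
          q (op x y) (op x z)) *
        (φ x z * (φ (op x z) x)⁻¹ * q x z) :=
  twisted_cocycle_is_cocycle_general op hsd q hq φ hφ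
end

section
/- Let X be a subrack of a group G (under conjugation) and φ ∈ Z²(G, ℂ^×) a group 2-cocycle, i.e., φ(g,h)φ(gh,t) = φ(h,t)φ(g,ht) and φ(g,e) = φ(e,g) = 1 for all g,h,t ∈ G. Then the restriction of φ to X × X satisfies the rack twisting condition: φ(x,z)φ(x▷y, x▷z)φ(x▷(y▷z), x)φ(y▷z, y) = φ(y,z)φ(x, y▷z)φ(x▷(y▷z), x▷y)φ(x▷z, x) for all x, y, z ∈ X, where x ▷ y = xyx^{-1}. -/
/-!
Put `u = y ▷ z`. The element `x y z` factors into three elements in six ways: `x · y · z`,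
`x · u · y`, `(x ▷ u) · x · y`, `(x ▷ y) · x · z`, `(x ▷ y) · (x ▷ z) · x` and
`(x ▷ u) · (x ▷ y) · x`. The cocycle identities of these six triples, taken with alternating
signs (in additive notation), sum to the twisting identity.
-/

local notation:70 x:71 " ▷ " y:71 => x * y * x⁻¹

theorem twisting_identity_of_group_cocycle {G M : Type*} [Group G] [CommGroup M]
    (φ : G → G → M) (hφ : ∀ g h t : G, φ g h * φ (g * h) t = φ h t * φ g (h * t))
    (x y z : G) :
    φ x z * φ (x ▷ y) (x ▷ z) * φ (x ▷ (y ▷ z)) x * φ (y ▷ z) y =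
      φ y z * φ x (y ▷ z) * φ (x ▷ (y ▷ z)) (x ▷ y) * φ (x ▷ z) x := by
  have hφ' (g h t : G) := congrArg Additive.ofMul (hφ g h t)
  have h₁ := hφ' x y z
  have h₂ := hφ' x (y ▷ z) y
  have h₃ := hφ' (x ▷ (y ▷ z)) x y
  have h₄ := hφ' (x ▷ y) x z
  have h₅ := hφ' (x ▷ y) (x ▷ z) x
  have h₆ := hφ' (x ▷ (y ▷ z)) (x ▷ y) x
  apply Additive.ofMul.injective
  simp only [ofMul_mul, mul_assoc, inv_mul_cancel_left, inv_mul_cancel, mul_one]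
    at h₁ h₂ h₃ h₄ h₅ h₆ ⊢
  linear_combination (norm := abel) h₁ - h₂ + h₃ - h₄ + h₅ - h₆

theorem group_cocycle_restriction_satisfies_twisting_general {G : Type*} [Group G]
    (X : Set G)
    (φ : G → G → ℂˣ)
    (hco : ∀ g h t : G, φ g h * φ (g * h) t = φ h t * φ g (h * t))
    (op : G → G → G) (hop : ∀ a b : G, op a b = a * b * a⁻¹) :
    ∀ x ∈ X, ∀ y ∈ X, ∀ z ∈ X,
      φ x z * φ (op x y) (op x z) * φ (op x (op y z)) x * φ (op y z) y =
        φ y z * φ x (op y z) * φ (op x (op y z)) (op x y) * φ (op x z) x := by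
  intro x _ y _ z _
  simp only [hop]
  exact twisting_identity_of_group_cocycle φ hco x y z

/-- The restriction of a group 2-cocycle `φ ∈ Z²(G, ℂˣ)` to a
subrack `X` of `G` (under conjugation `x ▷ y = x y x⁻¹`) satisfies the rack
twisting condition. -/
theorem group_cocycle_restriction_satisfies_twisting {G : Type*} [Group G]
    (X : Set G) (hX : ∀ x ∈ X, ∀ y ∈ X, x * y * x⁻¹ ∈ X)
    (φ : G → G → ℂˣ)
    (hco : ∀ g h t : G, φ g h * φ (g * h) t = φ h t * φ g (h * t))
    (hu : ∀ g : G, φ g 1 = 1 ∧ φ 1 g = 1)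
    (op : G → G → G) (hop : ∀ a b : G, op a b = a * b * a⁻¹) :
    ∀ x ∈ X, ∀ y ∈ X, ∀ z ∈ X,
      φ x z * φ (op x y) (op x z) * φ (op x (op y z)) x * φ (op y z) y =
        φ y z * φ x (op y z) * φ (op x (op y z)) (op x y) * φ (op x z) x :=
  group_cocycle_restriction_satisfies_twisting_general X φ hco op hop
end

section
/- Let q = p^t be a prime power, a a generator of the multiplicative group 𝔽_q^×, and consider the affine rack Q on 𝔽_q with x ▷ y = (1 − a)x + a y. Then any subrack X of Q with more than one element equals Q; i.e., every proper subrack is a singleton. -/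
/-! Since `x ▷ y - x = a (y - x)`, iterating `x ▷ ·` on `y` reaches every point
`x + aⁿ (y - x)` of `X`. When `a` generates `𝔽_qˣ`, the powers `aⁿ` run through all
nonzero scalars, so these points together with `x` exhaust `𝔽_q`. -/

theorem affine_iterate_mem {R : Type*} [CommRing R] {a : R} {X : Set R}
    (hX : ∀ x ∈ X, ∀ y ∈ X, (1 - a) * x + a * y ∈ X) {x y : R} (hx : x ∈ X) (hy : y ∈ X)
    (n : ℕ) : (1 - a ^ n) * x + a ^ n * y ∈ X := by
  induction n with
  | zero => simpa using hy
  | succ n ih =>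
    convert hX x hx _ ih using 1
    ring

theorem affine_combination_div_sub_eq {F : Type*} [Field F] {x y : F} (hxy : x ≠ y) (z : F) :
    (1 - (z - x) / (y - x)) * x + (z - x) / (y - x) * y = z := by
  field_simp [sub_ne_zero.2 hxy.symm]
  ring

/-- If `a` generates `𝔽_qˣ`, then any subrack of the affine rack
`(𝔽_q, x ▷ y = (1−a)x + ay)` with more than one element is the whole rack. -/
theorem affine_rack_generator_subracks_trivial
    {F : Type*} [Field F] [Fintype F] (a : Fˣ)
    (ha : ∀ u : Fˣ, u ∈ Subgroup.zpowers a) :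
    ∀ X : Set F, (∀ x ∈ X, ∀ y ∈ X, (1 - (a : F)) * x + (a : F) * y ∈ X) →
      ∀ x ∈ X, ∀ y ∈ X, x ≠ y → X = Set.univ := by
  intro X hX x hx y hy hxy
  refine Set.eq_univ_of_forall fun z => ?_
  obtain rfl | hzx := eq_or_ne z x
  · exact hx
  have hc : (z - x) / (y - x) ≠ 0 := div_ne_zero (sub_ne_zero.2 hzx) (sub_ne_zero.2 hxy.symm)
  obtain ⟨n, hn⟩ := mem_powers_iff_mem_zpowers.mpr (ha (Units.mk0 _ hc))
  have hpow : (a : F) ^ n = (z - x) / (y - x) := by simpa using congrArg Units.val hn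
  simpa only [hpow, affine_combination_div_sub_eq hxy] using affine_iterate_mem hX hx hy n
end

section
/- Let p be a prime and a ∈ 𝔽_p^× with a ≠ 1. Then any proper subrack of the affine rack (𝔽_p, ▷) with x ▷ y = (1 − a)x + a y has at most one element; equivalently, any two distinct elements x ≠ y of 𝔽_p generate the whole rack 𝔽_p. -/
/-! Composing `▷` with `▷⁻¹` gives a translation: `y ▷⁻¹ (x ▷ z) = z + a⁻¹(1 - a)(x - y)`.
So a subrack containing `x ≠ y` is closed under adding the nonzero element `a⁻¹(1 - a)(x - y)`,
and in `𝔽_p` the multiples of any nonzero element exhaust the field. -/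

theorem add_nsmul_mem_of_forall_add_mem {M : Type*} [AddMonoid M] {X : Set M} {t x : M}
    (hx : x ∈ X) (hX : ∀ z ∈ X, z + t ∈ X) (n : ℕ) : x + n • t ∈ X := by
  induction n with
  | zero => simpa using hx
  | succ n ih => simpa [succ_nsmul, add_assoc] using hX _ ih

theorem ZMod.eq_univ_of_forall_add_mem {p : ℕ} [Fact p.Prime] {X : Set (ZMod p)} {t x : ZMod p}
    (ht : t ≠ 0) (hx : x ∈ X) (hX : ∀ z ∈ X, z + t ∈ X) : X = Set.univ := by
  refine Set.eq_univ_of_forall fun z => ?_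
  have hz : x + ((z - x) / t).val • t = z := by
    rw [nsmul_eq_mul, ZMod.natCast_zmod_val, div_mul_cancel₀ _ ht, add_sub_cancel]
  exact hz ▸ add_nsmul_mem_of_forall_add_mem hx hX _

section AffineRack

variable {F : Type*} [Field F] {a : F} {X : Set F}

theorem add_mem_of_affine_rack_closed (ha0 : a ≠ 0)
    (hop : ∀ u ∈ X, ∀ v ∈ X, (1 - a) * u + a * v ∈ X)
    (hinv : ∀ u ∈ X, ∀ v ∈ X, a⁻¹ * (v - (1 - a) * u) ∈ X)
    {x y z : F} (hx : x ∈ X) (hy : y ∈ X) (hz : z ∈ X) :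
    z + a⁻¹ * (1 - a) * (x - y) ∈ X := by
  have h := hinv y hy _ (hop x hx z hz)
  convert h using 1
  field_simp
  ring

end AffineRack

/-- For a prime `p` and `a ∈ 𝔽_pˣ`, `a ≠ 1`, any two distinct
elements of the affine rack `(𝔽_p, x ▷ y = (1−a)x + ay)` generate the whole
rack: any subset containing them and closed under `▷` and `▷⁻¹` is everything.
Equivalently, every proper subrack has at most one element. -/
theorem affine_rack_Fp_proper_subracks_trivial
    (p : ℕ) [Fact p.Prime] (a : ZMod p) (ha0 : a ≠ 0) (ha1 : a ≠ 1) :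
    ∀ X : Set (ZMod p),
      (∀ u ∈ X, ∀ v ∈ X, (1 - a) * u + a * v ∈ X) →
      (∀ u ∈ X, ∀ v ∈ X, a⁻¹ * (v - (1 - a) * u) ∈ X) →
      ∀ x ∈ X, ∀ y ∈ X, x ≠ y → X = Set.univ := by
  intro X hop hinv x hx y hy hxy
  have ht : a⁻¹ * (1 - a) * (x - y) ≠ 0 :=
    mul_ne_zero (mul_ne_zero (inv_ne_zero ha0) (sub_ne_zero.mpr ha1.symm)) (sub_ne_zero.mpr hxy)
  exact ZMod.eq_univ_of_forall_add_mem ht hx fun z hz =>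
    add_mem_of_affine_rack_closed ha0 hop hinv hx hy hz
end

section
/- Let q = p^m with q ≡ 1 (mod 4) and q > 9. Then the conjugacy class of involutions in PSL(2, 𝔽_q) contains a subrack isomorphic to the dihedral rack D_{(q−1)/2}, and hence is of type D. -/
/-!
The antidiagonal matrices `w u = !![0, u; -u⁻¹, 0]` of `SL(2, F)` square to `-1` and satisfy
`w u * w v * (w u)⁻¹ = w (u ^ 2 * v⁻¹)`. If `ζ` has order `2 n` in `Fˣ`, then modulo `±1` the
element `w (ζ ^ j)` depends exactly on `j mod n`, so `x ↦ [w (ζ ^ x)]` embeds the dihedral rack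
`D_n` into `PSL(2, F)`. When `2 ≠ 0` and `-1 = i ^ 2`, every `A` with `A ^ 2 = -1` is conjugate to
`diag(i, -i)`, so all involutions of `PSL(2, F)` are conjugate and the image of `D_n` lies in the
class of any of them. For `n` even and `n > 4`, splitting `D_n` by parity shows it is of type D,
and type D is carried along injective rack maps.
-/

open Matrix Subgroup
open scoped MatrixGroups

/-- A subset `X` of a rack `(G, op)` is of type D if it contains a decomposable
subrack `Y = R ⊔ S` with `r ▷ (s ▷ (r ▷ s)) ≠ s` for some `r ∈ R`, `s ∈ S`. -/
def IsTypeD {G : Type*} (op : G → G → G) (X : Set G) : Prop :=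
  ∃ R S : Set G, R ⊆ X ∧ S ⊆ X ∧ R.Nonempty ∧ S.Nonempty ∧ Disjoint R S ∧
    (∀ a ∈ R, ∀ b ∈ R, op a b ∈ R) ∧ (∀ a ∈ S, ∀ b ∈ S, op a b ∈ S) ∧
    (∀ a ∈ R, ∀ b ∈ S, op a b ∈ S) ∧ (∀ a ∈ S, ∀ b ∈ R, op a b ∈ R) ∧
    ∃ r ∈ R, ∃ s ∈ S, op r (op s (op r s)) ≠ s

section TypeD

variable {G H : Type*} {op : G → G → G} {X : Set G}

theorem IsTypeD.mono {Y : Set G} (h : IsTypeD op X) (hXY : X ⊆ Y) : IsTypeD op Y := by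
  obtain ⟨R, S, hR, hS, rest⟩ := h
  exact ⟨R, S, hR.trans hXY, hS.trans hXY, rest⟩

theorem IsTypeD.image {op' : H → H → H} (h : IsTypeD op X) {f : G → H}
    (hf : Function.Injective f) (hop : ∀ x y, f (op x y) = op' (f x) (f y)) :
    IsTypeD op' (f '' X) := by
  obtain ⟨R, S, hRX, hSX, hR, hS, hRS, hRR, hSS, hRS', hSR, r, hr, s, hs, hrs⟩ := h
  have closed {A B : Set G} (hAB : ∀ a ∈ A, ∀ b ∈ B, op a b ∈ B) :
      ∀ a ∈ f '' A, ∀ b ∈ f '' B, op' a b ∈ f '' B := by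
    rintro _ ⟨a, ha, rfl⟩ _ ⟨b, hb, rfl⟩
    exact ⟨op a b, hAB a ha b hb, hop a b⟩
  refine ⟨f '' R, f '' S, Set.image_mono hRX, Set.image_mono hSX, hR.image f, hS.image f,
    (Set.disjoint_image_iff hf).mpr hRS, closed hRR, closed hSS, closed hRS', closed hSR,
    f r, Set.mem_image_of_mem f hr, f s, Set.mem_image_of_mem f hs, ?_⟩
  simpa only [← hop] using hf.ne hrs

end TypeD

theorem ZMod.isTypeD_dihedral {n : ℕ} (hn : Even n) (h4 : 4 < n) :
    IsTypeD (fun x y : ZMod n => 2 * x - y) Set.univ := by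
  let parity : ZMod n →+* ZMod 2 := ZMod.castHom (even_iff_two_dvd.mp hn) (ZMod 2)
  have parity_op (x y : ZMod n) : parity (2 * x - y) = parity y := by
    rw [map_sub, map_mul, map_ofNat, show (2 : ZMod 2) = 0 from rfl, zero_mul, zero_sub,
      ZMod.neg_eq_self_mod_two]
  have closed (i j : ZMod 2) :
      ∀ a ∈ parity ⁻¹' {i}, ∀ b ∈ parity ⁻¹' {j}, 2 * a - b ∈ parity ⁻¹' {j} := by
    intro a _ b hb
    simpa [parity_op] using hb
  refine ⟨parity ⁻¹' {0}, parity ⁻¹' {1}, Set.subset_univ _, Set.subset_univ _, ⟨0, map_zero _⟩,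
    ⟨1, map_one _⟩, Set.disjoint_singleton.mpr zero_ne_one |>.preimage _, closed 0 0, closed 1 1,
    closed 0 1, closed 1 0, 0, map_zero _, 1, map_one _, ?_⟩
  -- `0 ▷ (1 ▷ (0 ▷ 1)) = -3`, and `-3 = 1` would mean `n ∣ 4`
  intro h
  have hdvd : n ∣ 4 := by
    rw [← ZMod.natCast_eq_zero_iff]
    push_cast
    linear_combination -h
  have := Nat.le_of_dvd (by norm_num) hdvd
  omega

namespace Matrix.SpecialLinearGroup

variable {F : Type*} [Field F]

theorem fin_two_mem_center_iff {A : SL(2, F)} : A ∈ center SL(2, F) ↔ A = 1 ∨ A = -1 := by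
  refine ⟨fun hA => ?_, ?_⟩
  · obtain ⟨r, hr, hrA⟩ := mem_center_iff.mp hA
    rw [Fintype.card_fin, sq, mul_self_eq_one_iff] at hr
    rcases hr with rfl | rfl
    · exact .inl (Subtype.ext (by simpa using hrA.symm))
    · exact .inr (Subtype.ext (by rw [← hrA, coe_neg, coe_one, map_neg, map_one]))
  · rintro (rfl | rfl)
    · exact one_mem _
    · exact Subgroup.mem_center_iff.mpr fun B => by rw [mul_neg_one, neg_one_mul]

theorem fin_two_eq_one_or_eq_neg_one_of_mul_self (h2 : (2 : F) ≠ 0) {A : SL(2, F)}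
    (hA : A * A = 1) : A = 1 ∨ A = -1 := by
  have hinv : (A : Matrix (Fin 2) (Fin 2) F) = adjugate A := by
    rw [← coe_inv, inv_eq_of_mul_eq_one_left hA]
  induction A using fin_two_induction with | h a b c d hdet => ?_
  simp only [adjugate_fin_two_of] at hinv
  have ha : d = a := by simpa using (congr_fun₂ hinv 0 0).symm
  have hb : (2 : F) * b = 0 := by linear_combination (by simpa using congr_fun₂ hinv 0 1 : b = -b)
  have hc : (2 : F) * c = 0 := by linear_combination (by simpa using congr_fun₂ hinv 1 0 : c = -c)
  obtain rfl := (mul_eq_zero.mp hb).resolve_left h2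
  obtain rfl := (mul_eq_zero.mp hc).resolve_left h2
  subst d
  rcases mul_self_eq_one_iff.mp (by linear_combination hdet : a * a = 1) with rfl | rfl
  · exact .inl (Subtype.ext (by simp [one_fin_two]))
  · exact .inr (Subtype.ext (by simp [one_fin_two]))

theorem exists_det_ne_zero_mul_eq_mul_diagonal (h2 : (2 : F) ≠ 0) {i : F} (hi : i * i = -1)
    {a : Matrix (Fin 2) (Fin 2) F} (hdet : a.det = 1) (ha : a * a = -1) :
    ∃ P : Matrix (Fin 2) (Fin 2) F, P.det ≠ 0 ∧ a * P = P * diagonal ![i, -i] := by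
  set d : Matrix (Fin 2) (Fin 2) F := diagonal ![i, -i]
  have hd : d * d = -1 := by
    ext j k
    fin_cases j <;> fin_cases k <;> simp [d, hi]
  -- `a² = d² = -1` makes `M - a M d` an intertwiner for every `M`
  have intertwines (M : Matrix (Fin 2) (Fin 2) F) :
      a * (M - a * M * d) = (M - a * M * d) * d := by
    rw [mul_sub, sub_mul, ← mul_assoc, ← mul_assoc, ha, mul_assoc _ d d, hd]
    noncomm_ring
  -- the two determinants are `2 ± i (a₀₀ - a₁₁)`
  have hsum : (1 - a * 1 * d).det + (!![0, 1; -1, 0] - a * !![0, 1; -1, 0] * d).det = 4 := by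
    rw [det_fin_two] at hdet
    simp only [d, det_fin_two, sub_apply, mul_apply, Fin.sum_univ_two, mul_one, mul_zero,
      mul_neg, neg_mul, add_zero, zero_add, zero_sub, sub_neg_eq_add, one_apply_eq, one_apply_ne,
      diagonal_apply_eq, diagonal_apply_ne, ne_eq, one_ne_zero, zero_ne_one, not_false_eq_true,
      of_apply, cons_val', cons_val_zero, cons_val_one, cons_val_fin_one]
    linear_combination (2 : F) * hdet + 2 * (a 0 1 * a 1 0 - a 0 0 * a 1 1) * hi
  by_cases h : (1 - a * 1 * d).det = 0
  · refine ⟨_, fun h' => ?_, intertwines !![0, 1; -1, 0]⟩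
    rw [h, h', add_zero, show (4 : F) = 2 * 2 by norm_num] at hsum
    exact mul_ne_zero h2 h2 hsum.symm
  · exact ⟨_, h, intertwines 1⟩

theorem isConj_of_mul_self_eq_neg_one (h2 : (2 : F) ≠ 0) (hsq : IsSquare (-1 : F))
    {A B : SL(2, F)} (hA : A * A = -1) (hB : B * B = -1) : IsConj A B := by
  obtain ⟨i, hi⟩ := hsq
  let D : SL(2, F) := ⟨diagonal ![i, -i], by simp [← hi]⟩
  have isConj_D (C : SL(2, F)) (hC : C * C = -1) : IsConj D C := by
    obtain ⟨P, hP, hCP⟩ := exists_det_ne_zero_mul_eq_mul_diagonal h2 hi.symm C.2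
      (by simpa using congrArg Subtype.val hC)
    -- rescaling the first column of `P` fixes its determinant and keeps it an intertwiner
    let S : Matrix (Fin 2) (Fin 2) F := diagonal ![P.det⁻¹, 1]
    have hSD : S * diagonal ![i, -i] = diagonal ![i, -i] * S := by
      simp only [S, diagonal_mul_diagonal, mul_comm]
    have hPS : (P * S).det = 1 := by simp [S, det_diagonal, hP]
    refine isConj_iff.mpr ⟨(⟨P * S, hPS⟩ : SL(2, F)), mul_inv_eq_iff_eq_mul.mpr
      (Subtype.ext (show P * S * diagonal ![i, -i] = C * (P * S) from ?_))⟩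
    rw [mul_assoc, hSD, ← mul_assoc, ← mul_assoc, hCP]
  exact (isConj_D A hA).symm.trans (isConj_D B hB)

def antidiag (u : Fˣ) : SL(2, F) :=
  ⟨!![0, (u : F); -(u : F)⁻¹, 0], by simp [det_fin_two_of]⟩

@[simp]
theorem coe_antidiag (u : Fˣ) :
    (antidiag u : Matrix (Fin 2) (Fin 2) F) = !![0, (u : F); -(u : F)⁻¹, 0] :=
  rfl

theorem antidiag_injective : Function.Injective (antidiag (F := F)) := fun u v h =>
  Units.ext (by simpa [antidiag] using congr_fun₂ (congrArg Subtype.val h) 0 1)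

theorem antidiag_neg (u : Fˣ) : antidiag (-u) = -antidiag u := by
  apply Subtype.ext
  simp [coe_neg, inv_neg]

theorem antidiag_mul_self (u : Fˣ) : antidiag u * antidiag u = -1 := by
  apply Subtype.ext
  simp [coe_mul, one_fin_two]

theorem antidiag_conj (u v : Fˣ) :
    antidiag u * antidiag v * (antidiag u)⁻¹ = antidiag (u ^ 2 * v⁻¹) := by
  rw [mul_inv_eq_iff_eq_mul]
  -- the diagonal entries of the two products
  have h₁ : (u : F) * (v : F)⁻¹ = (u : F) ^ 2 * (v : F)⁻¹ * (u : F)⁻¹ := by field_simp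
  have h₂ : (u : F)⁻¹ * v = v * ((u : F) ^ 2)⁻¹ * u := by field_simp
  apply Subtype.ext
  simpa [coe_mul] using ⟨h₁, h₂⟩

theorem mk_antidiag_eq_mk_antidiag_iff {u v : Fˣ} :
    (antidiag u : PSL(2, F)) = antidiag v ↔ u ^ 2 = v ^ 2 := by
  rw [QuotientGroup.eq, fin_two_mem_center_iff, inv_mul_eq_one, inv_mul_eq_iff_eq_mul,
    mul_neg_one, ← antidiag_neg, antidiag_injective.eq_iff, antidiag_injective.eq_iff]
  simp only [Units.ext_iff, Units.val_pow_eq_pow_val, Units.val_neg]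
  rw [sq_eq_sq_iff_eq_or_eq_neg, eq_comm (a := (v : F)), neg_eq_iff_eq_neg]

section Dihedral

variable {ζ : Fˣ} {n : ℕ}

theorem mk_antidiag_zpow_eq_iff (hζ : orderOf ζ = 2 * n) {j k : ℤ} :
    (antidiag (ζ ^ j) : PSL(2, F)) = antidiag (ζ ^ k) ↔ (j : ZMod n) = k := by
  have sq_zpow (i : ℤ) : (ζ ^ i) ^ 2 = ζ ^ (2 * i) := by rw [mul_comm, _root_.zpow_mul]; norm_cast
  rw [mk_antidiag_eq_mk_antidiag_iff, sq_zpow, sq_zpow, zpow_eq_zpow_iff_modEq, hζ,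
    ZMod.intCast_eq_intCast_iff, Nat.cast_mul, Nat.cast_two,
    Int.ModEq.mul_left_cancel_iff' two_ne_zero]

def dihedralEmbedding (ζ : Fˣ) (n : ℕ) (x : ZMod n) : PSL(2, F) :=
  antidiag (ζ ^ (x.cast : ℤ))

theorem dihedralEmbedding_injective (hζ : orderOf ζ = 2 * n) :
    Function.Injective (dihedralEmbedding ζ n) := fun x y h => by
  simpa [ZMod.intCast_zmod_cast] using (mk_antidiag_zpow_eq_iff hζ).mp h

theorem dihedralEmbedding_conj (hζ : orderOf ζ = 2 * n) (x y : ZMod n) :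
    dihedralEmbedding ζ n x * dihedralEmbedding ζ n y * (dihedralEmbedding ζ n x)⁻¹ =
      dihedralEmbedding ζ n (2 * x - y) := by
  simp only [dihedralEmbedding, ← QuotientGroup.mk_mul, ← QuotientGroup.mk_inv, antidiag_conj]
  rw [show (ζ ^ (x.cast : ℤ)) ^ 2 * (ζ ^ (y.cast : ℤ))⁻¹ = ζ ^ (2 * x.cast - y.cast : ℤ) by group,
    mk_antidiag_zpow_eq_iff hζ]
  simp

end Dihedral

theorem mul_self_eq_neg_one_of_mk (h2 : (2 : F) ≠ 0) {A : SL(2, F)} (h1 : (A : PSL(2, F)) ≠ 1)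
    (hsq : (A : PSL(2, F)) ^ 2 = 1) : A * A = -1 := by
  rw [sq, ← QuotientGroup.mk_mul, QuotientGroup.eq_one_iff, fin_two_mem_center_iff] at hsq
  refine hsq.resolve_left fun hA => h1 ?_
  rw [QuotientGroup.eq_one_iff, fin_two_mem_center_iff]
  exact fin_two_eq_one_or_eq_neg_one_of_mul_self h2 hA

end Matrix.SpecialLinearGroup

open Matrix.SpecialLinearGroup

/-- For `q ≡ 1 (mod 4)`, `q > 9`, the conjugacy class of
involutions in `PSL(2, 𝔽_q)` contains a subrack isomorphic to the dihedral rack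
`D_{(q−1)/2}` and is of type D. -/
theorem psl2_involutions_typeD {F : Type*} [Field F] [Fintype F]
    (hq : Fintype.card F % 4 = 1) (h9 : 9 < Fintype.card F) :
    ∀ g : Matrix.SpecialLinearGroup (Fin 2) F ⧸
        Subgroup.center (Matrix.SpecialLinearGroup (Fin 2) F),
      g ≠ 1 → g ^ 2 = 1 →
      (∃ f : ZMod ((Fintype.card F - 1) / 2) →
          Matrix.SpecialLinearGroup (Fin 2) F ⧸
            Subgroup.center (Matrix.SpecialLinearGroup (Fin 2) F),
        Function.Injective f ∧ (∀ x, IsConj g (f x)) ∧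
        (∀ x y, f x * f y * (f x)⁻¹ = f (2 * x - y))) ∧
      IsTypeD (fun a b => a * b * a⁻¹) {h | IsConj g h} := by
  classical
  intro g hg1 hg2
  set n := (Fintype.card F - 1) / 2
  have h2 : (2 : F) ≠ 0 :=
    Ring.two_ne_zero (by rw [Ne, FiniteField.even_card_iff_char_two]; omega)
  have hsq : IsSquare (-1 : F) := FiniteField.isSquare_neg_one_iff.mpr (by omega)
  obtain ⟨ζ, hζ⟩ : ∃ ζ : Fˣ, orderOf ζ = 2 * n := by
    obtain ⟨ζ, hζ⟩ := IsCyclic.exists_ofOrder_eq_natCard (α := Fˣ)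
    exact ⟨ζ, by rw [hζ, Nat.card_eq_fintype_card, Fintype.card_units]; omega⟩
  obtain ⟨A, rfl⟩ := QuotientGroup.mk_surjective g
  have hA := mul_self_eq_neg_one_of_mk h2 hg1 hg2
  have hconj (x : ZMod n) : IsConj (A : PSL(2, F)) (dihedralEmbedding ζ n x) :=
    (QuotientGroup.mk' _).map_isConj
      (isConj_of_mul_self_eq_neg_one h2 hsq hA (antidiag_mul_self _))
  have hrack := dihedralEmbedding_conj hζ
  refine ⟨⟨_, dihedralEmbedding_injective hζ, hconj, hrack⟩, ?_⟩
  have htypeD := (ZMod.isTypeD_dihedral ⟨n / 2, by omega⟩ (by omega)).image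
    (op' := fun a b => a * b * a⁻¹) (dihedralEmbedding_injective hζ) fun x y => (hrack x y).symm
  exact htypeD.mono (by rintro _ ⟨x, -, rfl⟩; exact hconj x)
end

section
/- Let n > 1, q a prime power, a ∈ 𝔽_q^×, and let ξ generate 𝔽_q^×. For x = (x_1, …, x_n) ∈ (ℤ/(q−1))ⁿ with Σ x_i ≡ 0, let μ_x = n_a · diag(ξ^{x_1}, …, ξ^{x_n}) where n_a is the companion matrix of Xⁿ − a. Then μ_x μ_y μ_x^{-1} = μ_{x ▷ y} where x ▷ y = (x_1 + y_n − x_n, x_2 + y_1 − x_1, …, x_n + y_{n−1} − x_{n−1}); consequently the set X_{a,ξ} = {μ_x : Σ x_i ≡ 0 (mod q−1)} is a subrack of GL(n, 𝔽_q) isomorphic to the affine rack ((ℤ/(q−1))^{n−1}, g) with g(x_1,…,x_{n−1}) = (−Σ_{i=1}^{n−1} x_i, x_1, …, x_{n−2}). -/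
/-!
The companion matrix `n_a` is a monomial matrix `diag(a, 1, …, 1) · P`, where `P` is the
permutation matrix of `i ↦ i - 1`, so moving a diagonal matrix across `n_a` shifts its entries:
`diag(d) · n_a = n_a · diag(i ↦ d (i + 1))`. Hence `μ_x μ_y = n_a² · diag(ξ^{x_{i+1} + y_i})`,
and the conjugation identity reduces to `ξ^{x_{i+1}} ξ^{y_i} = ξ^{x_{i+1} + y_i - x_i} ξ^{x_i}`.

Writing `ρ x = (x_{i-1})_i` for the cyclic rotation, `x ▷ y = x - ρ x + ρ y`. On the hyperplane
`Σ x_i = 0` the last coordinate is minus the sum of the others, so dropping it is an isomorphism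
onto `(ℤ/(q-1))^{n-1}` that turns `ρ` into `g`.
-/

open Matrix Equiv

namespace Matrix

variable {ι R : Type*} [Fintype ι] [DecidableEq ι]

theorem diagonal_mul_permMatrix [NonAssocSemiring R] (σ : Perm ι) (d : ι → R) :
    diagonal d * σ.permMatrix R = σ.permMatrix R * diagonal (d ∘ σ.symm) := by
  ext i j
  rcases eq_or_ne (σ i) j with rfl | h <;> simp [*]

theorem isUnit_permMatrix [Semiring R] (σ : Perm ι) : IsUnit (σ.permMatrix R) := by
  simpa using (Group.isUnit σ⁻¹).map (permMatrixHom (n := ι) (R := R))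

theorem diagonal_mul_diagonal_mul_permMatrix [CommSemiring R] (σ : Perm ι) (d e : ι → R) :
    diagonal d * (diagonal e * σ.permMatrix R) =
      diagonal e * σ.permMatrix R * diagonal (d ∘ σ.symm) := by
  rw [← mul_assoc, diagonal_mul_diagonal, funext fun i => mul_comm (d i) (e i),
    ← diagonal_mul_diagonal, mul_assoc, diagonal_mul_permMatrix, mul_assoc]

theorem isUnit_diagonal_mul_permMatrix [CommRing R] {e : ι → R} (he : ∀ i, IsUnit (e i))
    (σ : Perm ι) : IsUnit (diagonal e * σ.permMatrix R) :=
  (isUnit_diagonal.mpr (Pi.isUnit_iff.mpr he)).mul (isUnit_permMatrix σ)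

theorem mul_diagonal_mul_mul_diagonal [Semiring R] {A : Matrix ι ι R} {τ : ι → ι}
    (hA : ∀ d, diagonal d * A = A * diagonal (d ∘ τ)) (c d : ι → R) :
    A * diagonal c * (A * diagonal d) = A * A * diagonal fun i => c (τ i) * d i := by
  rw [mul_assoc, ← mul_assoc (diagonal c), hA, mul_assoc, diagonal_mul_diagonal, ← mul_assoc]
  rfl

end Matrix

theorem Fin.eq_sub_one_iff {m : ℕ} {i j : Fin (m + 1)} :
    j = i - 1 ↔ (i : ℕ) = j + 1 ∨ (i : ℕ) = 0 ∧ (j : ℕ) = m := by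
  rw [Fin.ext_iff, Fin.coe_sub_one]
  split_ifs with h <;> simp only [Fin.ext_iff, Fin.val_zero] at h <;> omega

theorem companion_eq_diagonal_mul_permMatrix {R : Type*} [NonAssocSemiring R] (m : ℕ) (a : R) :
    Matrix.of (fun i j : Fin (m + 1) =>
        if (i : ℕ) = j + 1 then 1 else if (i : ℕ) = 0 ∧ (j : ℕ) = m then a else 0) =
      diagonal (fun i => if i = 0 then a else 1) * Perm.permMatrix R (Equiv.subRight 1) := by
  ext i j
  simp only [of_apply, diagonal_mul, PEquiv.toMatrix_apply, toPEquiv_apply, Option.mem_def,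
    Option.some.injEq, Equiv.subRight_apply, eq_comm (a := i - 1), Fin.eq_sub_one_iff,
    ← Fin.val_eq_zero_iff, mul_ite, mul_one, mul_zero]
  split_ifs <;> first | rfl | omega

section ZModPow

variable {G : Type*} [Monoid G] {N : ℕ} [NeZero N] {g : G}

theorem pow_val_add_of_pow_eq_one (hg : g ^ N = 1) (p q : ZMod N) :
    g ^ (p + q).val = g ^ p.val * g ^ q.val := by
  rw [ZMod.val_add, ← pow_eq_pow_mod _ hg, pow_add]

theorem pow_val_injective_of_orderOf_eq (hg : orderOf g = N) :
    Function.Injective fun p : ZMod N => g ^ p.val := by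
  intro p q h
  refine ZMod.val_injective N (pow_injOn_Iio_orderOf ?_ ?_ h) <;>
    simpa [hg] using ZMod.val_lt _

end ZModPow

theorem Fin.sum_comp_sub_one {M : Type*} [AddCommMonoid M] {n : ℕ} [NeZero n] (x : Fin n → M) :
    ∑ i, x (i - 1) = ∑ i, x i :=
  Equiv.sum_comp (Equiv.subRight 1) x

theorem Fin.succ_sub_one_eq_castSucc {n : ℕ} (i : Fin n) : i.succ - 1 = i.castSucc := by
  rw [← Fin.coeSucc_eq_succ, add_sub_cancel_right]

section NegSumShift

variable {M : Type*} [AddCommGroup M]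

def negSumShift {m : ℕ} [NeZero m] (v : Fin m → M) : Fin m → M :=
  fun i => if (i : ℕ) = 0 then -(∑ j, v j) else v (i - 1)

variable {k : ℕ}

theorem negSumShift_eq_cons (v : Fin (k + 1) → M) :
    negSumShift v = Fin.cons (-∑ j, v j) (Fin.init v) := by
  ext i
  induction i using Fin.cases with
  | zero => simp [negSumShift]
  | succ i => simp [negSumShift, Fin.init, Fin.succ_sub_one_eq_castSucc]

theorem negSumShift_add {m : ℕ} [NeZero m] (v w : Fin m → M) :
    negSumShift (v + w) = negSumShift v + negSumShift w := by
  ext i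
  simp only [negSumShift, Pi.add_apply, Finset.sum_add_distrib, neg_add]
  split_ifs <;> rfl

theorem negSumShift_bijective {m : ℕ} [NeZero m] :
    Function.Bijective (negSumShift : (Fin m → M) → Fin m → M) := by
  obtain ⟨k, rfl⟩ : ∃ k, m = k + 1 := Nat.exists_eq_succ_of_ne_zero (NeZero.ne m)
  refine Function.bijective_iff_has_inverse.mpr
    ⟨fun w => Fin.snoc (Fin.tail w) (-∑ j, w j), fun v => ?_, fun w => ?_⟩
  · simp [negSumShift_eq_cons, Fin.init, Fin.sum_univ_castSucc v]
  · simp [negSumShift_eq_cons, Fin.tail, Fin.sum_univ_succ w]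

theorem Fin.init_comp_sub_one_of_sum_eq_zero {x : Fin (k + 2) → M} (hx : ∑ i, x i = 0) :
    Fin.init (fun i => x (i - 1)) = negSumShift (Fin.init x) := by
  rw [negSumShift_eq_cons]
  ext i
  induction i using Fin.cases with
  | zero =>
    rw [Fin.sum_univ_castSucc, add_eq_zero_iff_eq_neg'] at hx
    have : (-1 : Fin (k + 2)) = Fin.last (k + 1) :=
      (eq_neg_of_add_eq_zero_left (Fin.last_add_one _)).symm
    simp [Fin.init, hx, this]
  | succ i => simp [Fin.init, Fin.succ_sub_one_eq_castSucc]

theorem Fin.bijOn_init_sum_eq_zero {m : ℕ} :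
    Set.BijOn Fin.init {x : Fin (m + 1) → M | ∑ i, x i = 0} Set.univ := by
  refine Set.InvOn.bijOn (f' := fun v => Fin.snoc v (-∑ j, v j))
    ⟨fun x hx => ?_, fun v _ => ?_⟩ (Set.mapsTo_univ _ _) fun v _ => ?_
  · rw [Set.mem_ofPred_eq, Fin.sum_univ_castSucc, add_eq_zero_iff_eq_neg'] at hx
    simp [Fin.init, ← hx]
  · simp
  · simp [Fin.sum_snoc]

end NegSumShift

theorem companion_class_affine_subrack_general
    {F : Type*} [Field F] [Fintype F]
    (n : ℕ) [NeZero n] [NeZero (n - 1)]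
    (ξ : Fˣ) (hξ : orderOf ξ = Fintype.card F - 1) (a : Fˣ) :
    let N := Fintype.card F - 1
    let na : Matrix (Fin n) (Fin n) F := fun i j =>
      if (i : ℕ) = (j : ℕ) + 1 then 1
      else if (i : ℕ) = 0 ∧ (j : ℕ) = n - 1 then (a : F) else 0
    let μ : (Fin n → ZMod N) → Matrix (Fin n) (Fin n) F := fun x =>
      na * Matrix.diagonal (fun i => ((ξ ^ (x i).val : Fˣ) : F))
    let tri : (Fin n → ZMod N) → (Fin n → ZMod N) → (Fin n → ZMod N) :=
      fun x y i => x i + y (i - 1) - x (i - 1)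
    let S : Set (Fin n → ZMod N) := {x | ∑ i, x i = 0}
    let ψ : (Fin n → ZMod N) → (Fin (n - 1) → ZMod N) := fun x j =>
      x (Fin.castLE (Nat.sub_le n 1) j)
    let g : (Fin (n - 1) → ZMod N) → (Fin (n - 1) → ZMod N) := fun v i =>
      if (i : ℕ) = 0 then -(∑ j, v j) else v (i - 1)
    -- conjugation identity: `μ_x μ_y = μ_{x ▷ y} μ_x`
    (∀ x y : Fin n → ZMod N, μ x * μ y = μ (tri x y) * μ x) ∧
    -- `X_{a,ξ}` is a subrack: `S` is closed under `▷` and `μ` is injective on `S`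
    (∀ x ∈ S, ∀ y ∈ S, tri x y ∈ S) ∧
    Set.InjOn μ S ∧
    -- each `μ_x` is invertible, i.e. lies in `GL(n, 𝔽_q)`
    (∀ x : Fin n → ZMod N, IsUnit (μ x)) ∧
    -- `ψ` is a rack isomorphism from `(S, tri)` onto the affine rack
    -- `((ℤ/(q−1))^{n−1}, g)`, with `g` an automorphism
    Set.BijOn ψ S Set.univ ∧
    Function.Bijective g ∧
    (∀ v w : Fin (n - 1) → ZMod N, g (v + w) = g v + g w) ∧
    (∀ x ∈ S, ∀ y ∈ S, ψ (tri x y) = ψ x - g (ψ x) + g (ψ y)) := by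
  obtain ⟨k, rfl⟩ : ∃ k, n = k + 2 := ⟨n - 2, by have := NeZero.ne (n - 1); omega⟩
  intro N na μ tri S ψ g
  have : NeZero N := NeZero.of_pos (hξ ▸ orderOf_pos ξ :)
  have hξN : ξ ^ N = 1 := by rw [← pow_orderOf_eq_one ξ, hξ]
  set σ : Perm (Fin (k + 2)) := Equiv.subRight 1
  have hna : na = diagonal (fun i => if i = 0 then (a : F) else 1) * σ.permMatrix F :=
    companion_eq_diagonal_mul_permMatrix (k + 1) (a : F)
  have hna_unit : IsUnit na :=
    hna ▸ isUnit_diagonal_mul_permMatrix (fun i => by split_ifs <;> simp) σ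
  have hμ_mul (x y : Fin (k + 2) → ZMod N) : μ x * μ y = na * na * diagonal fun i =>
      ((ξ ^ (x (σ.symm i)).val : Fˣ) : F) * ((ξ ^ (y i).val : Fˣ) : F) :=
    mul_diagonal_mul_mul_diagonal (hna ▸ fun d => diagonal_mul_diagonal_mul_permMatrix σ d _) _ _
  refine ⟨fun x y => ?_, fun x _ y hy => ?_, fun x _ y _ hxy => ?_,
    fun x => hna_unit.mul (isUnit_diagonal.mpr (Pi.isUnit_iff.mpr fun i => Units.isUnit _)),
    Fin.bijOn_init_sum_eq_zero, negSumShift_bijective, negSumShift_add, fun x hx y hy => ?_⟩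
  · rw [hμ_mul, hμ_mul]
    congr 2
    funext i
    show _ = ((ξ ^ (x (σ.symm i) + y (σ (σ.symm i)) - x (σ (σ.symm i))).val : Fˣ) : F) * _
    rw [σ.apply_symm_apply, ← Units.val_mul, ← Units.val_mul,
      ← pow_val_add_of_pow_eq_one hξN, ← pow_val_add_of_pow_eq_one hξN, sub_add_cancel]
  · show ∑ i, (x i + y (i - 1) - x (i - 1)) = 0
    rwa [Finset.sum_sub_distrib, Finset.sum_add_distrib, Fin.sum_comp_sub_one,
      Fin.sum_comp_sub_one, add_sub_cancel_left]
  · funext i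
    exact pow_val_injective_of_orderOf_eq hξ
      (Units.ext (congrFun (diagonal_injective (hna_unit.mul_left_cancel hxy)) i))
  · have htri : tri x y = x - (fun i => x (i - 1)) + fun i => y (i - 1) :=
      funext fun i => add_sub_right_comm _ _ _
    show Fin.init (tri x y) = Fin.init x - negSumShift (Fin.init x) + negSumShift (Fin.init y)
    rw [← Fin.init_comp_sub_one_of_sum_eq_zero hx, ← Fin.init_comp_sub_one_of_sum_eq_zero hy,
      htri]
    rfl

/-- Let `ξ` generate `𝔽_qˣ`, `a ∈ 𝔽_qˣ`, `n > 1`, and for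
`x ∈ (ℤ/(q−1))ⁿ` let `μ_x = n_a · diag(ξ^{x_1}, …, ξ^{x_n})`, where `n_a` is the
companion matrix of `Xⁿ − a`. Then `μ_x μ_y μ_x⁻¹ = μ_{x ▷ y}` with
`(x ▷ y)_i = x_i + y_{i−1} − x_{i−1}` (indices mod `n`); consequently
`X_{a,ξ} = {μ_x : Σ x_i = 0}` is a subrack of `GL(n, 𝔽_q)` isomorphic (via the
first `n−1` coordinates) to the affine rack `((ℤ/(q−1))^{n−1}, g)` with
`g(x_1,…,x_{n−1}) = (−Σ x_i, x_1, …, x_{n−2})`. -/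
theorem companion_class_affine_subrack
    {F : Type*} [Field F] [Fintype F] [DecidableEq F]
    (n : ℕ) [NeZero n] [NeZero (n - 1)] (hn : 1 < n)
    (ξ : Fˣ) (hξ : orderOf ξ = Fintype.card F - 1) (a : Fˣ) :
    let N := Fintype.card F - 1
    let na : Matrix (Fin n) (Fin n) F := fun i j =>
      if (i : ℕ) = (j : ℕ) + 1 then 1
      else if (i : ℕ) = 0 ∧ (j : ℕ) = n - 1 then (a : F) else 0
    let μ : (Fin n → ZMod N) → Matrix (Fin n) (Fin n) F := fun x =>
      na * Matrix.diagonal (fun i => ((ξ ^ (x i).val : Fˣ) : F))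
    let tri : (Fin n → ZMod N) → (Fin n → ZMod N) → (Fin n → ZMod N) :=
      fun x y i => x i + y (i - 1) - x (i - 1)
    let S : Set (Fin n → ZMod N) := {x | ∑ i, x i = 0}
    let ψ : (Fin n → ZMod N) → (Fin (n - 1) → ZMod N) := fun x j =>
      x (Fin.castLE (Nat.sub_le n 1) j)
    let g : (Fin (n - 1) → ZMod N) → (Fin (n - 1) → ZMod N) := fun v i =>
      if (i : ℕ) = 0 then -(∑ j, v j) else v (i - 1)
    -- conjugation identity: `μ_x μ_y = μ_{x ▷ y} μ_x`
    (∀ x y : Fin n → ZMod N, μ x * μ y = μ (tri x y) * μ x) ∧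
    -- `X_{a,ξ}` is a subrack: `S` is closed under `▷` and `μ` is injective on `S`
    (∀ x ∈ S, ∀ y ∈ S, tri x y ∈ S) ∧
    Set.InjOn μ S ∧
    -- each `μ_x` is invertible, i.e. lies in `GL(n, 𝔽_q)`
    (∀ x : Fin n → ZMod N, IsUnit (μ x)) ∧
    -- `ψ` is a rack isomorphism from `(S, tri)` onto the affine rack
    -- `((ℤ/(q−1))^{n−1}, g)`, with `g` an automorphism
    Set.BijOn ψ S Set.univ ∧
    Function.Bijective g ∧
    (∀ v w : Fin (n - 1) → ZMod N, g (v + w) = g v + g w) ∧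
    (∀ x ∈ S, ∀ y ∈ S, ψ (tri x y) = ψ x - g (ψ x) + g (ψ y)) :=
  companion_class_affine_subrack_general n ξ hξ a
end

section
/- Let G be a finite group with 𝔽_q-split torus T and Weyl group element σ with representative n_σ ∈ N_G(T), acting on (ℤ/(q−1))ⁿ via an automorphism g_σ (defined by n_σ ξ_x n_σ^{-1} = ξ_{g_σ(x)}). Then the set X_{σ,ξ} = {n_σ ξ_x : x ∈ (ℤ/(q−1))ⁿ} is closed under conjugation and the map n_σ ξ_x ↦ x is a rack isomorphism from X_{σ,ξ} (with conjugation) onto the affine rack ((ℤ/(q−1))ⁿ, g_σ), where x ▷ y = g_σ(y) + (1 − g_σ)(x). -/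
/-! Writing `(nσ ξ_y)(nσ ξ_x)⁻¹ = nσ ξ_{y - x} nσ⁻¹`, the conjugate of `nσ ξ_y` by `nσ ξ_x` is
`nσ ξ_x ξ_{gσ(y - x)} = nσ ξ_{x + gσ(y - x)}`, which is the affine rack operation. -/

section TwistedTorus

variable {A G : Type*} [AddCommGroup A] [Group G] {ξ : A → G}

theorem map_sub_of_map_add (hξmul : ∀ x y, ξ (x + y) = ξ x * ξ y) (x y : A) :
    ξ (y - x) = ξ y * (ξ x)⁻¹ :=
  eq_mul_inv_of_mul_eq (by rw [← hξmul, sub_add_cancel])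

theorem mul_conj_eq_affine (hξmul : ∀ x y, ξ (x + y) = ξ x * ξ y) {g : G} {σ : A →+ A}
    (hσ : ∀ x, g * ξ x * g⁻¹ = ξ (σ x)) (x y : A) :
    (g * ξ x) * (g * ξ y) * (g * ξ x)⁻¹ = g * ξ (x - σ x + σ y) :=
  calc (g * ξ x) * (g * ξ y) * (g * ξ x)⁻¹
      = g * (ξ x * (g * ξ (y - x) * g⁻¹)) := by rw [map_sub_of_map_add hξmul]; group
    _ = g * ξ (x + σ (y - x)) := by rw [hσ, hξmul]
    _ = g * ξ (x - σ x + σ y) := by rw [map_sub, add_sub, sub_add_eq_add_sub]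

end TwistedTorus

theorem weyl_element_class_affine_subrack_general
    {G : Type*} [Group G] (n q : ℕ)
    (ξ : (Fin n → ZMod (q - 1)) → G)
    (hξmul : ∀ x y, ξ (x + y) = ξ x * ξ y)
    (hξinj : Function.Injective ξ)
    (nσ : G) (gσ : (Fin n → ZMod (q - 1)) ≃+ (Fin n → ZMod (q - 1)))
    (hσ : ∀ x, nσ * ξ x * nσ⁻¹ = ξ (gσ x)) :
    let Xσ : Set G := {h | ∃ x, h = nσ * ξ x}
    (∀ a ∈ Xσ, ∀ b ∈ Xσ, a * b * a⁻¹ ∈ Xσ) ∧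
    Function.Injective (fun x : Fin n → ZMod (q - 1) => nσ * ξ x) ∧
    (∀ x y : Fin n → ZMod (q - 1),
      (nσ * ξ x) * (nσ * ξ y) * (nσ * ξ x)⁻¹ = nσ * ξ (x - gσ x + gσ y)) := by
  intro Xσ
  have hconj := mul_conj_eq_affine hξmul (σ := gσ.toAddMonoidHom) hσ
  refine ⟨?_, (mul_right_injective nσ).comp hξinj, hconj⟩
  rintro _ ⟨x, rfl⟩ _ ⟨y, rfl⟩
  exact ⟨_, hconj x y⟩

/-- Let `G` be a finite group, `T ≅ (ℤ/(q−1))ⁿ` a split torus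
embedded via `x ↦ ξ_x`, and `n_σ` a representative of a Weyl group element `σ`
acting on `(ℤ/(q−1))ⁿ` by the automorphism `g_σ` (so that
`n_σ ξ_x n_σ⁻¹ = ξ_{g_σ x}`). Then the set `X_{σ,ξ} = {n_σ ξ_x}` is closed under
conjugation and `n_σ ξ_x ↦ x` is a rack isomorphism onto the affine rack
`((ℤ/(q−1))ⁿ, g_σ)`, i.e. conjugation corresponds to
`x ▷ y = (1 − g_σ)(x) + g_σ(y)`. -/
theorem weyl_element_class_affine_subrack
    {G : Type*} [Group G] [Fintype G] (n q : ℕ)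
    (ξ : (Fin n → ZMod (q - 1)) → G)
    (hξmul : ∀ x y, ξ (x + y) = ξ x * ξ y)
    (hξinj : Function.Injective ξ)
    (nσ : G) (gσ : (Fin n → ZMod (q - 1)) ≃+ (Fin n → ZMod (q - 1)))
    (hσ : ∀ x, nσ * ξ x * nσ⁻¹ = ξ (gσ x)) :
    let Xσ : Set G := {h | ∃ x, h = nσ * ξ x}
    (∀ a ∈ Xσ, ∀ b ∈ Xσ, a * b * a⁻¹ ∈ Xσ) ∧
    Function.Injective (fun x : Fin n → ZMod (q - 1) => nσ * ξ x) ∧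
    (∀ x y : Fin n → ZMod (q - 1),
      (nσ * ξ x) * (nσ * ξ y) * (nσ * ξ x)⁻¹ = nσ * ξ (x - gσ x + gσ y)) :=
  weyl_element_class_affine_subrack_general n q ξ hξmul hξinj nσ gσ hσ
end

section
/- Let K be a subgroup of a finite group G and κ ∈ C_G(K) (the centralizer of K in G). Let τ ∈ K, let O be the conjugacy class of τ in K and Õ the conjugacy class of τκ in G. Then the map R_κ : O → Õ, g ↦ gκ, is well-defined and is an injective morphism of racks (with both sides carrying the conjugation rack structure). Consequently, if O is of type D as a rack, then so is Õ. -/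
/-! Since `κ` commutes with `K`, conjugating `τ κ` by `g ∈ K` gives `(g τ g⁻¹) κ`, and the same
commutation shows that right multiplication by `κ` is a rack morphism on `O`. Being injective,
it carries a decomposable subrack of `O` witnessing type D onto one of `Õ`. -/

section TypeD

variable {G H : Type*} {op : G → G → G} {op' : H → H → H} {X : Set G} {Y : Set H} {f : G → H}

theorem IsTypeD.of_injOn_of_mapsTo (hmaps : Set.MapsTo f X Y) (hinj : Set.InjOn f X)
    (hf : ∀ a ∈ X, ∀ b ∈ X, f (op a b) = op' (f a) (f b)) (hX : IsTypeD op X) :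
    IsTypeD op' Y := by
  obtain ⟨R, S, hRX, hSX, hR, hS, hdisj, hRR, hSS, hRS, hSR, r, hr, s, hs, hne⟩ := hX
  have image_closed : ∀ {A B C : Set G}, A ⊆ X → B ⊆ X → (∀ a ∈ A, ∀ b ∈ B, op a b ∈ C) →
      ∀ a ∈ f '' A, ∀ b ∈ f '' B, op' a b ∈ f '' C := by
    rintro A B C hA hB hABC _ ⟨a, ha, rfl⟩ _ ⟨b, hb, rfl⟩
    exact ⟨op a b, hABC a ha b hb, hf a (hA ha) b (hB hb)⟩
  have hrs : op r s ∈ S := hRS r hr s hs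
  have hsrs : op s (op r s) ∈ S := hSS s hs _ hrs
  have hrsrs : op r (op s (op r s)) ∈ S := hRS r hr _ hsrs
  refine ⟨f '' R, f '' S, hmaps.mono_left hRX |>.image_subset,
    hmaps.mono_left hSX |>.image_subset, hR.image f, hS.image f, ?_,
    image_closed hRX hRX hRR, image_closed hSX hSX hSS, image_closed hRX hSX hRS,
    image_closed hSX hRX hSR, f r, ⟨r, hr, rfl⟩, f s, ⟨s, hs, rfl⟩, ?_⟩
  · rw [Set.disjoint_iff_inter_eq_empty, ← hinj.image_inter hRX hSX,
      Set.disjoint_iff_inter_eq_empty.mp hdisj, Set.image_empty]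
  · rw [← hf r (hRX hr) s (hSX hs), ← hf s (hSX hs) _ (hSX hrs), ← hf r (hRX hr) _ (hSX hsrs)]
    exact fun h => hne (hinj (hSX hrsrs) (hSX hs) h)

end TypeD

section Conj

variable {G : Type*} [Group G] {g x y κ : G}

theorem conj_mul_right_of_commute (hg : Commute g κ) (τ : G) :
    g * (τ * κ) * g⁻¹ = g * τ * g⁻¹ * κ := by
  simp only [mul_assoc, ← hg.inv_left.eq]

theorem conj_mul_right_mul_right_of_commute (hx : Commute x κ) (hy : Commute y κ) :
    x * κ * (y * κ) * (x * κ)⁻¹ = x * y * x⁻¹ * κ :=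
  calc x * κ * (y * κ) * (x * κ)⁻¹ = x * (κ * y) * x⁻¹ := by group
    _ = x * (y * κ) * x⁻¹ := by rw [hy.eq]
    _ = x * y * x⁻¹ * κ := conj_mul_right_of_commute hx y

end Conj

theorem subrack_via_central_element_typeD_general {G : Type*} [Group G]
    (K : Subgroup G) (κ : G) (hκ : κ ∈ Subgroup.centralizer (K : Set G))
    (τ : G) (hτ : τ ∈ K) :
    let O : Set G := {k | ∃ g ∈ K, g * τ * g⁻¹ = k}
    let Otilde : Set G := {h | IsConj (τ * κ) h}
    let conjOp : G → G → G := fun a b => a * b * a⁻¹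
    (∀ x ∈ O, x * κ ∈ Otilde) ∧
    Set.InjOn (fun x : G => x * κ) O ∧
    (∀ x ∈ O, ∀ y ∈ O, conjOp (x * κ) (y * κ) = (conjOp x y) * κ) ∧
    (IsTypeD conjOp O → IsTypeD conjOp Otilde) := by
  intro O Otilde conjOp
  have hcomm : ∀ g ∈ K, Commute g κ := fun g hg => Subgroup.mem_centralizer_iff.mp hκ g hg
  have hOK : O ⊆ K := by
    rintro _ ⟨g, hg, rfl⟩
    exact K.mul_mem (K.mul_mem hg hτ) (K.inv_mem hg)
  have hmaps : ∀ x ∈ O, x * κ ∈ Otilde := by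
    rintro _ ⟨g, hg, rfl⟩
    exact isConj_iff.mpr ⟨g, conj_mul_right_of_commute (hcomm g hg) τ⟩
  have hinj : Set.InjOn (fun x : G => x * κ) O := (mul_left_injective κ).injOn
  have hmor : ∀ x ∈ O, ∀ y ∈ O, conjOp (x * κ) (y * κ) = (conjOp x y) * κ :=
    fun x hx y hy => conj_mul_right_mul_right_of_commute (hcomm x (hOK hx)) (hcomm y (hOK hy))
  exact ⟨hmaps, hinj, hmor,
    IsTypeD.of_injOn_of_mapsTo hmaps hinj fun x hx y hy => (hmor x hx y hy).symm⟩

/-- For `K ≤ G`, `κ` centralizing `K`, `τ ∈ K`, the map `g ↦ gκ`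
identifies the conjugacy class `O` of `τ` in `K` with a subrack of the conjugacy
class `Õ` of `τκ` in `G`; it is injective and a rack morphism, and if `O` is of
type D then so is `Õ`. -/
theorem subrack_via_central_element_typeD {G : Type*} [Group G] [Fintype G]
    (K : Subgroup G) (κ : G) (hκ : κ ∈ Subgroup.centralizer (K : Set G))
    (τ : G) (hτ : τ ∈ K) :
    let O : Set G := {k | ∃ g ∈ K, g * τ * g⁻¹ = k}
    let Otilde : Set G := {h | IsConj (τ * κ) h}
    let conjOp : G → G → G := fun a b => a * b * a⁻¹
    (∀ x ∈ O, x * κ ∈ Otilde) ∧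
    Set.InjOn (fun x : G => x * κ) O ∧
    (∀ x ∈ O, ∀ y ∈ O, conjOp (x * κ) (y * κ) = (conjOp x y) * κ) ∧
    (IsTypeD conjOp O → IsTypeD conjOp Otilde) :=
  subrack_via_central_element_typeD_general K κ hκ τ hτ
end
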